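/- Let v : [0,1] × [0,2π] → ℝ² be C², with |v(r,θ)| = 1 everywhere and v(r,0) = v(r,2π) for all r. Then the function r ↦ ∫_0^{2π} v(r,θ) ∧ ∂_θ v(r,θ) dθ is constant in r. -/

import Mathlib

open Set Metric

/-!
Put `Φ r = ∫₀^{2π} v ∧ ∂_θ v`. Differentiating under the integral sign,
`Φ' r = ∫₀^{2π} (∂_r v ∧ ∂_θ v + v ∧ ∂_r ∂_θ v)`. As `|v| = 1`, both partial derivatives of `v`
are orthogonal to `v`, hence collinear, so `∂_r v ∧ ∂_θ v = 0 = ∂_θ v ∧ ∂_r v`; with the symmetry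
of second derivatives the integrand becomes `∂_θ (v ∧ ∂_r v)`, whose integral over a period
vanishes because `v`, and therefore `∂_r v`, is periodic in `θ`.
-/

def wedge (a b : ℝ × ℝ) : ℝ := a.1 * b.2 - a.2 * b.1

theorem wedge_eq_zero_of_orthogonal {u a b : ℝ × ℝ} (hu : u ≠ 0)
    (ha : u.1 * a.1 + u.2 * a.2 = 0) (hb : u.1 * b.1 + u.2 * b.2 = 0) : wedge a b = 0 := by
  have hu' : u.1 ^ 2 + u.2 ^ 2 ≠ 0 := by
    contrapose! hu
    obtain ⟨h₁, h₂⟩ := (add_eq_zero_iff_of_nonneg (sq_nonneg _) (sq_nonneg _)).mp hu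
    exact Prod.ext (pow_eq_zero_iff two_ne_zero |>.mp h₁) (pow_eq_zero_iff two_ne_zero |>.mp h₂)
  refine (mul_eq_zero.mp ?_).resolve_left hu'
  unfold wedge
  linear_combination (b.2 * u.1 - b.1 * u.2) * ha - (a.2 * u.1 - a.1 * u.2) * hb

@[fun_prop]
theorem Continuous.wedge {X : Type*} [TopologicalSpace X] {f g : X → ℝ × ℝ}
    (hf : Continuous f) (hg : Continuous g) : Continuous fun x => wedge (f x) (g x) := by
  unfold _root_.wedge
  fun_prop

theorem HasDerivAt.wedge {f g : ℝ → ℝ × ℝ} {f' g' : ℝ × ℝ} {x : ℝ}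
    (hf : HasDerivAt f f' x) (hg : HasDerivAt g g' x) :
    HasDerivAt (fun t => wedge (f t) (g t)) (wedge f' (g x) + wedge (f x) g') x := by
  have hf₁ : HasDerivAt (fun t => (f t).1) f'.1 x :=
    (ContinuousLinearMap.fst ℝ ℝ ℝ).hasFDerivAt.comp_hasDerivAt x hf
  have hf₂ : HasDerivAt (fun t => (f t).2) f'.2 x :=
    (ContinuousLinearMap.snd ℝ ℝ ℝ).hasFDerivAt.comp_hasDerivAt x hf
  have hg₁ : HasDerivAt (fun t => (g t).1) g'.1 x :=
    (ContinuousLinearMap.fst ℝ ℝ ℝ).hasFDerivAt.comp_hasDerivAt x hg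
  have hg₂ : HasDerivAt (fun t => (g t).2) g'.2 x :=
    (ContinuousLinearMap.snd ℝ ℝ ℝ).hasFDerivAt.comp_hasDerivAt x hg
  exact ((hf₁.mul hg₂).sub (hf₂.mul hg₁)).congr_deriv (by unfold _root_.wedge; ring)

section PartialDerivatives

variable {F : Type*} [NormedAddCommGroup F] [NormedSpace ℝ F]

section

variable {f : ℝ × ℝ → F} {x t : ℝ}

theorem DifferentiableAt.hasDerivAt_partial_fst (hf : DifferentiableAt ℝ f (x, t)) :
    HasDerivAt (fun s => f (s, t)) (fderiv ℝ f (x, t) (1, 0)) x :=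
  hf.hasFDerivAt.comp_hasDerivAt x ((hasDerivAt_id x).prodMk (hasDerivAt_const x t))

theorem DifferentiableAt.hasDerivAt_partial_snd (hf : DifferentiableAt ℝ f (x, t)) :
    HasDerivAt (fun s => f (x, s)) (fderiv ℝ f (x, t) (0, 1)) t :=
  hf.hasFDerivAt.comp_hasDerivAt t ((hasDerivAt_const t x).prodMk (hasDerivAt_id t))

end

theorem HasDerivAt.eq_of_eqOn {f g : ℝ → F} {f' g' : F} {s : Set ℝ} {x : ℝ} (hf : HasDerivAt f f' x)
    (hg : HasDerivAt g g' x) (hfg : EqOn f g s) (hs : UniqueDiffWithinAt ℝ s x) (hx : x ∈ s) :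
    f' = g' :=
  hs.eq_deriv s hf.hasDerivWithinAt (hg.hasDerivWithinAt.congr hfg (hfg hx))

end PartialDerivatives

theorem orthogonal_fderiv_of_sq_eq {E : Type*} [NormedAddCommGroup E] [NormedSpace ℝ E]
    {v : E → ℝ × ℝ} {s : Set E} {p : E} {c : ℝ} (hv : DifferentiableAt ℝ v p)
    (hs : UniqueDiffWithinAt ℝ s p) (hp : p ∈ s)
    (hnorm : ∀ q ∈ s, (v q).1 ^ 2 + (v q).2 ^ 2 = c) (y : E) :
    (v p).1 * (fderiv ℝ v p y).1 + (v p).2 * (fderiv ℝ v p y).2 = 0 := by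
  have hv₁ := hasFDerivAt_fst.comp p hv.hasFDerivAt
  have hv₂ := hasFDerivAt_snd.comp p hv.hasFDerivAt
  have hconst : HasFDerivWithinAt (fun q => (v q).1 ^ 2 + (v q).2 ^ 2) (0 : E →L[ℝ] ℝ) s p :=
    (hasFDerivWithinAt_const c p s).congr hnorm (hnorm p hp)
  have h := congrArg (· y) (hs.eq ((hv₁.pow 2).add (hv₂.pow 2)).hasFDerivWithinAt hconst)
  simp only [Function.comp_apply, Nat.add_one_sub_one, pow_one, nsmul_eq_mul, Nat.cast_ofNat,
    add_apply, smul_apply,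
    ContinuousLinearMap.comp_apply, ContinuousLinearMap.coe_fst', ContinuousLinearMap.coe_snd',
    smul_eq_mul, zero_apply] at h
  linarith

theorem hasDerivAt_intervalIntegral_of_continuous {E : Type*} [NormedAddCommGroup E]
    [NormedSpace ℝ E] {f f' : ℝ → ℝ → E} (hf : Continuous (Function.uncurry f))
    (hf' : Continuous (Function.uncurry f'))
    (hderiv : ∀ x t, HasDerivAt (fun x => f x t) (f' x t) x) (a b x₀ : ℝ) :
    HasDerivAt (fun x => ∫ t in a..b, f x t) (∫ t in a..b, f' x₀ t) x₀ := by
  obtain ⟨C, hC⟩ : ∃ C, ∀ p ∈ closedBall x₀ 1 ×ˢ uIcc a b, ‖Function.uncurry f' p‖ ≤ C :=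
    ((isCompact_closedBall x₀ 1).prod isCompact_uIcc).exists_bound_of_continuousOn
      hf'.continuousOn
  refine (intervalIntegral.hasDerivAt_integral_of_dominated_loc_of_deriv_le
    (F := f) (F' := f') (bound := fun _ => C) (ball_mem_nhds x₀ one_pos)
    (.of_forall fun x => (hf.comp (.prodMk_right x)).aestronglyMeasurable)
    ((hf.comp (.prodMk_right x₀)).intervalIntegrable _ _)
    ((hf'.comp (.prodMk_right x₀)).aestronglyMeasurable)
    (.of_forall fun t ht x hx => hC (x, t) ⟨ball_subset_closedBall hx, uIoc_subset_uIcc ht⟩)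
    intervalIntegrable_const (.of_forall fun t _ x _ => hderiv x t)).2

theorem hasDerivAt_wedge_fderiv_comp {v : ℝ × ℝ → ℝ × ℝ} {c : ℝ → ℝ × ℝ} {c' b : ℝ × ℝ}
    {x : ℝ} (hv : DifferentiableAt ℝ v (c x)) (hv' : DifferentiableAt ℝ (fderiv ℝ v) (c x))
    (hc : HasDerivAt c c' x) :
    HasDerivAt (fun s => wedge (v (c s)) (fderiv ℝ v (c s) b))
      (wedge (fderiv ℝ v (c x) c') (fderiv ℝ v (c x) b)
        + wedge (v (c x)) (fderiv ℝ (fderiv ℝ v) (c x) c' b)) x :=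
  (hv.hasFDerivAt.comp_hasDerivAt x hc).wedge
    ((ContinuousLinearMap.apply ℝ (ℝ × ℝ) b).hasFDerivAt.comp_hasDerivAt x
      (hv'.hasFDerivAt.comp_hasDerivAt x hc))

section UnitVectorField

variable {v : ℝ × ℝ → ℝ × ℝ}

theorem wedge_fderiv_add_wedge_fderiv_fderiv_symm (hv : ContDiff ℝ 2 v)
    {s : Set (ℝ × ℝ)} (hs : UniqueDiffOn ℝ s) (hnorm : ∀ q ∈ s, (v q).1 ^ 2 + (v q).2 ^ 2 = 1)
    {p : ℝ × ℝ} (hp : p ∈ s) (a b : ℝ × ℝ) :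
    wedge (fderiv ℝ v p a) (fderiv ℝ v p b) + wedge (v p) (fderiv ℝ (fderiv ℝ v) p a b)
      = wedge (fderiv ℝ v p b) (fderiv ℝ v p a) + wedge (v p) (fderiv ℝ (fderiv ℝ v) p b a) := by
  have hv₀ : v p ≠ 0 := fun h => by simpa [h] using hnorm p hp
  have horth := orthogonal_fderiv_of_sq_eq (hv.differentiable two_ne_zero p) (hs p hp) hp hnorm
  rw [wedge_eq_zero_of_orthogonal hv₀ (horth a) (horth b),
    wedge_eq_zero_of_orthogonal hv₀ (horth b) (horth a),
    hv.contDiffAt.isSymmSndFDerivAt (by simp) a b]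

theorem hasDerivAt_integral_wedge_fderiv_snd (hv : ContDiff ℝ 2 v) (a b x₀ : ℝ) :
    HasDerivAt (fun x => ∫ θ in a..b, wedge (v (x, θ)) (fderiv ℝ v (x, θ) (0, 1)))
      (∫ θ in a..b, (wedge (fderiv ℝ v (x₀, θ) (1, 0)) (fderiv ℝ v (x₀, θ) (0, 1))
        + wedge (v (x₀, θ)) (fderiv ℝ (fderiv ℝ v) (x₀, θ) (1, 0) (0, 1)))) x₀ := by
  have hv' : ContDiff ℝ 1 (fderiv ℝ v) := hv.fderiv_right one_add_one_eq_two.le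
  have h₀ := hv.continuous
  have h₁ := hv'.continuous
  have h₂ := hv'.continuous_fderiv one_ne_zero
  refine hasDerivAt_intervalIntegral_of_continuous
    (f' := fun x θ => wedge (fderiv ℝ v (x, θ) (1, 0)) (fderiv ℝ v (x, θ) (0, 1))
      + wedge (v (x, θ)) (fderiv ℝ (fderiv ℝ v) (x, θ) (1, 0) (0, 1)))
    ?_ ?_ (fun x θ => ?_) a b x₀
  · fun_prop
  · fun_prop
  · exact hasDerivAt_wedge_fderiv_comp (hv.differentiable two_ne_zero _)
      (hv'.differentiable one_ne_zero _) ((hasDerivAt_id x).prodMk (hasDerivAt_const x θ))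

theorem integral_wedge_fderiv_fst_eq_zero (hv : ContDiff ℝ 2 v) {I : Set ℝ}
    (hI : UniqueDiffOn ℝ I) {a b : ℝ} (hab : a < b)
    (hnorm : ∀ r ∈ I, ∀ θ ∈ Icc a b, (v (r, θ)).1 ^ 2 + (v (r, θ)).2 ^ 2 = 1)
    (hper : ∀ r ∈ I, v (r, a) = v (r, b)) {r : ℝ} (hr : r ∈ I) :
    ∫ θ in a..b, (wedge (fderiv ℝ v (r, θ) (1, 0)) (fderiv ℝ v (r, θ) (0, 1))
        + wedge (v (r, θ)) (fderiv ℝ (fderiv ℝ v) (r, θ) (1, 0) (0, 1))) = 0 := by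
  have hv' : ContDiff ℝ 1 (fderiv ℝ v) := hv.fderiv_right one_add_one_eq_two.le
  have h₀ := hv.continuous
  have h₁ := hv'.continuous
  have h₂ := hv'.continuous_fderiv one_ne_zero
  have hderiv : ∀ θ ∈ uIcc a b,
      HasDerivAt (fun t => wedge (v (r, t)) (fderiv ℝ v (r, t) (1, 0)))
        (wedge (fderiv ℝ v (r, θ) (1, 0)) (fderiv ℝ v (r, θ) (0, 1))
          + wedge (v (r, θ)) (fderiv ℝ (fderiv ℝ v) (r, θ) (1, 0) (0, 1))) θ := by
    intro θ hθ
    rw [uIcc_of_le hab.le] at hθ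
    rw [wedge_fderiv_add_wedge_fderiv_fderiv_symm hv (hI.prod (uniqueDiffOn_Icc hab))
      (fun q hq => hnorm q.1 hq.1 q.2 hq.2) ⟨hr, hθ⟩]
    exact hasDerivAt_wedge_fderiv_comp (hv.differentiable two_ne_zero _)
      (hv'.differentiable one_ne_zero _) ((hasDerivAt_const θ r).prodMk (hasDerivAt_id θ))
  have hper_partial : fderiv ℝ v (r, a) (1, 0) = fderiv ℝ v (r, b) (1, 0) :=
    ((hv.differentiable two_ne_zero _).hasDerivAt_partial_fst).eq_of_eqOn
      ((hv.differentiable two_ne_zero _).hasDerivAt_partial_fst) hper (hI r hr) hr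
  rw [intervalIntegral.integral_eq_sub_of_hasDerivAt hderiv
    ((Continuous.intervalIntegrable (by fun_prop) _ _)), hper r hr, hper_partial, sub_self]

end UnitVectorField

/-- For a `C²` family of closed unit-circle-valued curves `θ ↦ v(r,θ)`, the winding
integral `∫₀^{2π} v(r,·) ∧ ∂_θ v(r,·)` does not depend on `r ∈ [0,1]`. -/
theorem stmt7 (v : ℝ × ℝ → ℝ × ℝ) (hv : ContDiff ℝ 2 v)
    (hnorm : ∀ r ∈ Set.Icc (0:ℝ) 1, ∀ θ ∈ Set.Icc (0:ℝ) (2 * Real.pi),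
      (v (r, θ)).1 ^ 2 + (v (r, θ)).2 ^ 2 = 1)
    (hper : ∀ r ∈ Set.Icc (0:ℝ) 1, v (r, 0) = v (r, 2 * Real.pi)) :
    ∀ r₁ ∈ Set.Icc (0:ℝ) 1, ∀ r₂ ∈ Set.Icc (0:ℝ) 1,
      (∫ θ in (0:ℝ)..(2 * Real.pi),
          ((v (r₁, θ)).1 * (deriv (fun t => v (r₁, t)) θ).2
            - (v (r₁, θ)).2 * (deriv (fun t => v (r₁, t)) θ).1))
        = ∫ θ in (0:ℝ)..(2 * Real.pi),
          ((v (r₂, θ)).1 * (deriv (fun t => v (r₂, t)) θ).2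
            - (v (r₂, θ)).2 * (deriv (fun t => v (r₂, t)) θ).1) := by
  intro r₁ hr₁ r₂ hr₂
  have hΦ : ∀ r ∈ Icc (0:ℝ) 1, HasDerivAt
      (fun x => ∫ θ in (0:ℝ)..(2 * Real.pi), wedge (v (x, θ)) (fderiv ℝ v (x, θ) (0, 1))) 0 r :=
    fun r hr => (hasDerivAt_integral_wedge_fderiv_snd hv 0 (2 * Real.pi) r).congr_deriv
      (integral_wedge_fderiv_fst_eq_zero hv (uniqueDiffOn_Icc zero_lt_one) Real.two_pi_pos
        hnorm hper hr)
  have hconst := constant_of_has_deriv_right_zero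
    (fun x hx => (hΦ x hx).continuousAt.continuousWithinAt)
    (fun x hx => (hΦ x (Ico_subset_Icc_self hx)).hasDerivWithinAt)
  have hslice (r θ : ℝ) : deriv (fun t => v (r, t)) θ = fderiv ℝ v (r, θ) (0, 1) :=
    (hv.differentiable two_ne_zero _).hasDerivAt_partial_snd.deriv
  simp only [hslice]
  exact (hconst r₁ hr₁).trans (hconst r₂ hr₂).symm
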